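/- arXiv:2107.11568 — 6 statements merged into one kernel-verified Lean document; each statement's English description precedes it below -/
import Mathlib

section
/- Let α ∈ [0,1] and let B : [0,∞) → [0,∞) be a Bernstein function with B(0) = 0. If liminf_{λ→∞} λ^{−α} B(λ) > 0, then there exists a constant k₀ > 0 such that B(r) ≥ k₀ · min(r, r^α) for all r ≥ 0, and consequently there exist constants k₁, k₂ > 0 such that B(r) ≥ k₁ r^α − k₂ for all r ≥ 0. -/
open Filter Set

/-- A Bernstein function: `B : [0,∞) → [0,∞)` continuous on `[0,∞)`, smooth on `(0,∞)`,
with `(-1)^(n-1) B^(n)(r) ≥ 0` for all `n ≥ 1` and `r > 0`. -/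
def IsBernstein (B : ℝ → ℝ) : Prop :=
  (∀ r : ℝ, 0 ≤ r → 0 ≤ B r) ∧
  ContinuousOn B (Set.Ici 0) ∧
  ContDiffOn ℝ (⊤ : ℕ∞) B (Set.Ioi 0) ∧
  ∀ n : ℕ, 1 ≤ n → ∀ r : ℝ, 0 < r →
    0 ≤ (-1 : ℝ) ^ (n - 1) * iteratedDerivWithin n B (Set.Ioi 0) r

/-- A Bernstein function is concave on `[0,∞)`. -/
lemma bernstein_concave (B : ℝ → ℝ) (hB : IsBernstein B) :
    ConcaveOn ℝ (Set.Ici 0) B := by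
  obtain ⟨hpos, hcont, hsmooth, hsign⟩ := hB
  have hio : interior (Set.Ici (0:ℝ)) = Set.Ioi 0 := interior_Ici
  apply concaveOn_of_deriv2_nonpos (convex_Ici 0) hcont
  · rw [hio]; exact hsmooth.differentiableOn (by simp)
  · rw [hio]
    exact (hsmooth.deriv_of_isOpen isOpen_Ioi (m := 1) (WithTop.coe_le_coe.2 (le_top : ((1 + 1 : ℕ) : ℕ∞) ≤ ⊤))).differentiableOn one_ne_zero
  · intro x hx
    rw [hio] at hx
    have h2 := hsign 2 one_le_two x hx
    have heq : iteratedDerivWithin 2 B (Set.Ioi 0) x = iteratedDeriv 2 B x := by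
      rw [iteratedDerivWithin_eq_iteratedFDerivWithin, iteratedDeriv_eq_iteratedFDeriv,
        iteratedFDerivWithin_of_isOpen 2 isOpen_Ioi hx]
    have : iteratedDeriv 2 B x ≤ 0 := by
      rw [heq] at h2
      simpa using h2
    rw [iteratedDeriv_succ, iteratedDeriv_one] at this
    exact this

theorem stmt0 (α : ℝ) (hα : α ∈ Set.Icc (0:ℝ) 1) (B : ℝ → ℝ)
    (hB : IsBernstein B) (hB0 : B 0 = 0)
    (hliminf : 0 < Filter.liminf (fun l : ℝ => l ^ (-α) * B l) Filter.atTop) :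
    (∃ k₀ > 0, ∀ r : ℝ, 0 ≤ r → k₀ * min r (r ^ α) ≤ B r) ∧
    (∃ k₁ > 0, ∃ k₂ > 0, ∀ r : ℝ, 0 ≤ r → k₁ * r ^ α - k₂ ≤ B r) := by
  obtain ⟨hα0, hα1⟩ := hα
  have hpos := hB.1
  -- the liminf is over eventually nonnegative values
  have hbdd : Filter.IsBoundedUnder (· ≥ ·) Filter.atTop
      (fun l : ℝ => l ^ (-α) * B l) := by
    apply Filter.isBoundedUnder_of_eventually_ge (a := 0)
    filter_upwards [Filter.eventually_ge_atTop (0:ℝ)] with l hl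
    exact mul_nonneg (Real.rpow_nonneg hl _) (hpos l hl)
  set c := Filter.liminf (fun l : ℝ => l ^ (-α) * B l) Filter.atTop / 2 with hc_def
  have hc : 0 < c := by positivity
  have hev : ∀ᶠ l in Filter.atTop, c < l ^ (-α) * B l :=
    Filter.eventually_lt_of_lt_liminf (by simp [hc_def]; linarith) hbdd
  obtain ⟨M₀, hM₀⟩ := Filter.eventually_atTop.1 hev
  set M := max M₀ 1 with hM_def
  have hM1 : (1:ℝ) ≤ M := le_max_right _ _
  have hM0 : (0:ℝ) < M := lt_of_lt_of_le one_pos hM1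
  -- the tail bound : B r ≥ c * r^α for r ≥ M
  have htail : ∀ r : ℝ, M ≤ r → c * r ^ α ≤ B r := by
    intro r hr
    have hr0 : 0 < r := lt_of_lt_of_le hM0 hr
    have h := hM₀ r (le_trans (le_max_left _ _) hr)
    rw [Real.rpow_neg hr0.le] at h
    have hrα : 0 < r ^ α := Real.rpow_pos_of_pos hr0 α
    calc c * r ^ α ≤ ((r ^ α)⁻¹ * B r) * r ^ α :=
          mul_le_mul_of_nonneg_right h.le hrα.le
      _ = B r := by field_simp
  have hBM : c * M ^ α ≤ B M := htail M le_rfl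
  -- concavity bound : B r ≥ (r/M) * B M for 0 ≤ r ≤ M
  have hconc : ∀ r : ℝ, 0 ≤ r → r ≤ M → (r / M) * B M ≤ B r := by
    intro r hr hrM
    have hab : r / M + (1 - r / M) = 1 := by ring
    have ha : 0 ≤ r / M := div_nonneg hr hM0.le
    have hb : 0 ≤ 1 - r / M := by
      have : r / M ≤ 1 := (div_le_one hM0).2 hrM
      linarith
    have h := (bernstein_concave B hB).2 (Set.mem_Ici.2 hM0.le)
      (Set.mem_Ici.2 le_rfl) ha hb hab
    have hx : (r / M) • M + (1 - r / M) • (0:ℝ) = r := by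
      rw [smul_eq_mul, smul_eq_mul, mul_zero, add_zero, div_mul_cancel₀ r hM0.ne']
    rw [hx] at h
    simpa [hB0, smul_eq_mul] using h
  set k₀ := c * M ^ α / M with hk₀_def
  have hMα : 0 < M ^ α := Real.rpow_pos_of_pos hM0 α
  have hk₀ : 0 < k₀ := by positivity
  have hk₀c : k₀ ≤ c := by
    rw [hk₀_def, div_le_iff₀ hM0]
    have : M ^ α ≤ M := by
      calc M ^ α ≤ M ^ (1:ℝ) := Real.rpow_le_rpow_of_exponent_le hM1 hα1
        _ = M := Real.rpow_one M
    nlinarith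
  -- main bound
  have hmain : ∀ r : ℝ, 0 ≤ r → k₀ * min r (r ^ α) ≤ B r := by
    intro r hr
    rcases le_or_gt r M with hrM | hrM
    · calc k₀ * min r (r ^ α) ≤ k₀ * r :=
            mul_le_mul_of_nonneg_left (min_le_left _ _) hk₀.le
        _ = (r / M) * (c * M ^ α) := by rw [hk₀_def]; ring
        _ ≤ (r / M) * B M :=
            mul_le_mul_of_nonneg_left hBM (div_nonneg hr hM0.le)
        _ ≤ B r := hconc r hr hrM
    · have hr1 : (1:ℝ) ≤ r := hM1.trans hrM.le
      have hmin : min r (r ^ α) = r ^ α := by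
        apply min_eq_right
        calc r ^ α ≤ r ^ (1:ℝ) := Real.rpow_le_rpow_of_exponent_le hr1 hα1
          _ = r := Real.rpow_one r
      rw [hmin]
      calc k₀ * r ^ α ≤ c * r ^ α :=
            mul_le_mul_of_nonneg_right hk₀c (Real.rpow_nonneg hr _)
        _ ≤ B r := htail r hrM.le
  refine ⟨⟨k₀, hk₀, hmain⟩, k₀, hk₀, k₀, hk₀, ?_⟩
  intro r hr
  rcases le_or_gt r 1 with hr1 | hr1
  · have : r ^ α ≤ 1 := Real.rpow_le_one hr hr1 hα0
    have := hpos r hr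
    nlinarith
  · have hmin : min r (r ^ α) = r ^ α := by
      apply min_eq_right
      calc r ^ α ≤ r ^ (1:ℝ) := Real.rpow_le_rpow_of_exponent_le hr1.le hα1
        _ = r := Real.rpow_one r
    have h := hmain r hr
    rw [hmin] at h
    linarith
end

section
/- Let (Ω, F, P) be a probability space and let S : Ω → ℝ be a measurable random variable with S ≥ 0 almost surely. Then for every ε ∈ (0,1), the identity E[S^{ε}] = (ε/Γ(1−ε)) ∫_0^∞ t^{−ε−1} (1 − E[e^{−t S}]) dt holds as an equality of values in [0,∞], where both sides may be infinite. -/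
/-!
For `s ≥ 0`, write `1 - e^{-ts} = ∫₀ᵗ s e^{-su} du` and exchange the order of integration:
`∫₀^∞ t^{-ε-1} (1 - e^{-ts}) dt = ∫₀^∞ s e^{-su} (∫ᵤ^∞ t^{-ε-1} dt) du
  = (s/ε) ∫₀^∞ u^{-ε} e^{-su} du = Γ(1-ε) s^ε / ε`.
Put `s = S ω`, integrate in `ω` and exchange the `t`- and `ω`-integrals once more. All integrals
are lower Lebesgue integrals of nonnegative functions, so Tonelli applies with no integrability
conditions.
-/

open MeasureTheory Set ENNReal

lemma lintegral_Ioc_mul_exp_neg_mul {s t : ℝ} (hs : 0 ≤ s) (ht : 0 ≤ t) :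
    ∫⁻ u in Ioc 0 t, ENNReal.ofReal (s * Real.exp (-(s * u))) =
      ENNReal.ofReal (1 - Real.exp (-t * s)) := by
  have hderiv (u : ℝ) :
      HasDerivAt (fun u => -Real.exp (-(s * u))) (s * Real.exp (-(s * u))) u :=
    (((hasDerivAt_id' u).const_mul s).fun_neg.exp.fun_neg).congr_deriv (by ring)
  have hcont : Continuous fun u => s * Real.exp (-(s * u)) := by fun_prop
  have hint : IntegrableOn (fun u => s * Real.exp (-(s * u))) (Ioc 0 t) := hcont.integrableOn_Ioc
  rw [← ofReal_integral_eq_lintegral_ofReal hint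
    (Filter.Eventually.of_forall fun u => by positivity), ← intervalIntegral.integral_of_le ht,
    intervalIntegral.integral_eq_sub_of_hasDerivAt (fun u _ => hderiv u)
      (hcont.intervalIntegrable 0 t), mul_zero, neg_zero, Real.exp_zero, neg_mul, mul_comm t]
  congr 1
  ring

lemma lintegral_Ici_rpow {a c : ℝ} (ha : a < -1) (hc : 0 < c) :
    ∫⁻ t in Ici c, ENNReal.ofReal (t ^ a) = ENNReal.ofReal (-c ^ (a + 1) / (a + 1)) := by
  rw [← Measure.restrict_congr_set Ioi_ae_eq_Ici, ← integral_Ioi_rpow_of_lt ha hc,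
    ofReal_integral_eq_lintegral_ofReal (integrableOn_Ioi_rpow_of_lt ha hc)]
  filter_upwards [ae_restrict_mem measurableSet_Ioi] with x hx
  exact Real.rpow_nonneg (hc.trans hx).le a

lemma lintegral_rpow_mul_exp_neg_mul_Ioi {a r : ℝ} (ha : 0 < a) (hr : 0 < r) :
    ∫⁻ t in Ioi 0, ENNReal.ofReal (t ^ (a - 1) * Real.exp (-(r * t))) =
      ENNReal.ofReal ((1 / r) ^ a * Real.Gamma a) := by
  have hI := Real.integral_rpow_mul_exp_neg_mul_Ioi ha hr
  rw [← hI, ofReal_integral_eq_lintegral_ofReal]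
  · exact .of_integral_ne_zero (by rw [hI]; positivity)
  · filter_upwards [ae_restrict_mem measurableSet_Ioi] with t ht
    exact mul_nonneg (Real.rpow_nonneg (le_of_lt ht) _) (Real.exp_nonneg _)

lemma lintegral_Ioi_mul_lintegral_Ioc_comm {f g : ℝ → ℝ≥0∞} (hf : Measurable f)
    (hg : Measurable g) (a : ℝ) :
    ∫⁻ t in Ioi a, f t * ∫⁻ u in Ioc a t, g u = ∫⁻ u in Ioi a, g u * ∫⁻ t in Ici u, f t := by
  have hIoc (t : ℝ) : ∫⁻ u in Ioc a t, g u = ∫⁻ u in Ioi a, (Iic t).indicator g u := by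
    rw [lintegral_indicator measurableSet_Iic, Measure.restrict_restrict measurableSet_Iic,
      Iic_inter_Ioi]
  have hIci : ∀ u ∈ Ioi a, ∫⁻ t in Ici u, f t = ∫⁻ t in Ioi a, (Ici u).indicator f t := by
    intro u hu
    rw [lintegral_indicator measurableSet_Ici, Measure.restrict_restrict measurableSet_Ici,
      inter_eq_left.mpr (Ici_subset_Ioi.mpr hu)]
  have hle : MeasurableSet {p : ℝ × ℝ | p.2 ≤ p.1} :=
    measurableSet_le measurable_snd measurable_fst
  calc ∫⁻ t in Ioi a, f t * ∫⁻ u in Ioc a t, g u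
      = ∫⁻ t in Ioi a, ∫⁻ u in Ioi a, f t * (Iic t).indicator g u := by
        simp_rw [hIoc]
        refine lintegral_congr fun t => (lintegral_const_mul _ ?_).symm
        exact hg.indicator measurableSet_Iic
    _ = ∫⁻ u in Ioi a, ∫⁻ t in Ioi a, f t * (Iic t).indicator g u := by
        refine lintegral_lintegral_swap (Measurable.aemeasurable ?_)
        exact (hf.comp measurable_fst).mul ((hg.comp measurable_snd).indicator hle)
    _ = ∫⁻ u in Ioi a, ∫⁻ t in Ioi a, g u * (Ici u).indicator f t := by
        refine lintegral_congr fun u => lintegral_congr fun t => ?_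
        by_cases h : u ≤ t <;> simp [indicator, h, mul_comm]
    _ = ∫⁻ u in Ioi a, g u * ∫⁻ t in Ici u, f t := by
        refine setLIntegral_congr_fun measurableSet_Ioi fun u hu => ?_
        rw [hIci u hu, lintegral_const_mul _ (hf.indicator measurableSet_Ici)]

lemma lintegral_rpow_mul_one_sub_exp {ε s : ℝ} (hε : ε ∈ Ioo (0 : ℝ) 1) (hs : 0 ≤ s) :
    ∫⁻ t in Ioi 0, ENNReal.ofReal (t ^ (-ε - 1)) * ENNReal.ofReal (1 - Real.exp (-t * s)) =
      ENNReal.ofReal (Real.Gamma (1 - ε) / ε * s ^ ε) := by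
  obtain ⟨hε0, hε1⟩ := hε
  rcases hs.eq_or_lt with rfl | hs
  · simp [Real.zero_rpow hε0.ne']
  have hexp : ∀ t ∈ Ioi (0 : ℝ), ENNReal.ofReal (1 - Real.exp (-t * s)) =
      ∫⁻ u in Ioc 0 t, ENNReal.ofReal (s * Real.exp (-(s * u))) :=
    fun t ht => (lintegral_Ioc_mul_exp_neg_mul hs.le (le_of_lt ht)).symm
  have htail : ∀ u ∈ Ioi (0 : ℝ), ENNReal.ofReal (s * Real.exp (-(s * u))) *
      ∫⁻ t in Ici u, ENNReal.ofReal (t ^ (-ε - 1)) =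
      ENNReal.ofReal (s / ε) * ENNReal.ofReal (u ^ ((1 - ε) - 1) * Real.exp (-(s * u))) := by
    intro u hu
    rw [lintegral_Ici_rpow (by linarith) hu, ← ENNReal.ofReal_mul (by positivity),
      ← ENNReal.ofReal_mul (by positivity)]
    congr 1
    rw [show -ε - 1 + 1 = -ε by ring, show 1 - ε - 1 = -ε by ring]
    field_simp
  rw [setLIntegral_congr_fun measurableSet_Ioi fun t ht => congrArg _ (hexp t ht),
    lintegral_Ioi_mul_lintegral_Ioc_comm (by fun_prop) (by fun_prop),
    setLIntegral_congr_fun measurableSet_Ioi htail, lintegral_const_mul' _ _ ofReal_ne_top,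
    lintegral_rpow_mul_exp_neg_mul_Ioi (by linarith) hs, ← ENNReal.ofReal_mul (by positivity)]
  congr 1
  rw [one_div, Real.inv_rpow hs.le, Real.rpow_sub hs, Real.rpow_one]
  field_simp

lemma lintegral_ofReal_one_sub {α : Type*} [MeasurableSpace α] {μ : Measure α}
    [IsProbabilityMeasure μ] {f : α → ℝ} (hf : AEMeasurable f μ) (hf0 : ∀ᵐ x ∂μ, 0 ≤ f x)
    (hf1 : ∀ᵐ x ∂μ, f x ≤ 1) :
    ∫⁻ x, ENNReal.ofReal (1 - f x) ∂μ = 1 - ∫⁻ x, ENNReal.ofReal (f x) ∂μ := by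
  have hle : ∀ᵐ x ∂μ, ENNReal.ofReal (f x) ≤ 1 := by
    filter_upwards [hf1] with x hx
    exact ofReal_le_one.mpr hx
  have hfin : ∫⁻ x, ENNReal.ofReal (f x) ∂μ ≠ ∞ :=
    ((lintegral_mono_ae hle).trans_lt (by simp)).ne
  calc ∫⁻ x, ENNReal.ofReal (1 - f x) ∂μ = ∫⁻ x, 1 - ENNReal.ofReal (f x) ∂μ := by
        refine lintegral_congr_ae ?_
        filter_upwards [hf0] with x hx
        rw [ENNReal.ofReal_sub _ hx, ofReal_one]
    _ = 1 - ∫⁻ x, ENNReal.ofReal (f x) ∂μ := by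
        rw [lintegral_sub' hf.ennreal_ofReal hfin hle, lintegral_one, measure_univ]

theorem stmt3 {Ω : Type*} [MeasurableSpace Ω] (P : Measure Ω) [IsProbabilityMeasure P]
    (S : Ω → ℝ) (hS : Measurable S) (hSnonneg : ∀ᵐ ω ∂P, 0 ≤ S ω)
    (ε : ℝ) (hε : ε ∈ Set.Ioo (0:ℝ) 1) :
    ∫⁻ ω, ENNReal.ofReal (S ω ^ ε) ∂P =
      (ENNReal.ofReal ε / ENNReal.ofReal (Real.Gamma (1 - ε))) *
        ∫⁻ t in Set.Ioi (0:ℝ),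
          ENNReal.ofReal (t ^ (-ε - 1)) *
            (1 - ∫⁻ ω, ENNReal.ofReal (Real.exp (-t * S ω)) ∂P) := by
  have hΓ : 0 < Real.Gamma (1 - ε) := Real.Gamma_pos_of_pos (by linarith [hε.2])
  have hlaplace : ∀ t ∈ Ioi (0 : ℝ), 1 - ∫⁻ ω, ENNReal.ofReal (Real.exp (-t * S ω)) ∂P =
      ∫⁻ ω, ENNReal.ofReal (1 - Real.exp (-t * S ω)) ∂P := by
    intro t ht
    refine (lintegral_ofReal_one_sub (by fun_prop) (ae_of_all _ fun _ => Real.exp_nonneg _) ?_).symm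
    filter_upwards [hSnonneg] with ω hω
    exact Real.exp_le_one_iff.mpr (by nlinarith [mem_Ioi.mp ht])
  have hinner : ∀ᵐ ω ∂P, ∫⁻ t in Ioi 0,
      ENNReal.ofReal (t ^ (-ε - 1)) * ENNReal.ofReal (1 - Real.exp (-t * S ω)) =
      ENNReal.ofReal (Real.Gamma (1 - ε) / ε * S ω ^ ε) := by
    filter_upwards [hSnonneg] with ω hω
    exact lintegral_rpow_mul_one_sub_exp hε hω
  symm
  rw [setLIntegral_congr_fun measurableSet_Ioi fun t ht => by
      rw [hlaplace t ht, ← lintegral_const_mul' _ _ ofReal_ne_top],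
    lintegral_lintegral_swap (by fun_prop), lintegral_congr_ae hinner,
    ← ENNReal.ofReal_div_of_pos hΓ, ← lintegral_const_mul' _ _ ofReal_ne_top]
  refine lintegral_congr fun ω => ?_
  rw [← ENNReal.ofReal_mul (div_nonneg hε.1.le hΓ.le)]
  congr 1
  field_simp [hε.1.ne']
end

section
/- Let α ∈ (0,1], ε ∈ (0,α) and a > 0. Then there exists a constant c > 0 such that for every r ∈ (0,1], ∫_1^∞ (1 − e^{−a r t^{α}}) t^{−ε−1} dt ≤ c r^{ε/α}. -/
/-!
Since `1 - e^{-x} ≤ min x 1`, the integrand is at most `min (a r t^{α-ε-1}) (t^{-ε-1})` for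
`t > 0`. Cutting the integral over `(0, ∞)` at `T = r^{-1/α}`, the first bound gives
`a r T^{α-ε}/(α-ε)` on `(0, T]` (as `α - ε > 0`) and the second `T^{-ε}/ε` on `(T, ∞)`
(as `ε > 0`); both equal a constant times `r^{ε/α}`.
-/

open MeasureTheory Set

theorem lintegral_Ioc_zero_rpow {p T : ℝ} (hp : -1 < p) (hT : 0 ≤ T) :
    ∫⁻ t in Ioc 0 T, ENNReal.ofReal (t ^ p) = ENNReal.ofReal (T ^ (p + 1) / (p + 1)) := by
  have hint : IntegrableOn (fun t : ℝ => t ^ p) (Ioc 0 T) :=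
    (intervalIntegrable_iff_integrableOn_Ioc_of_le hT).mp
      (intervalIntegral.intervalIntegrable_rpow' hp)
  rw [← ofReal_integral_eq_lintegral_ofReal hint
      ((ae_restrict_iff' measurableSet_Ioc).mpr
        (.of_forall fun t ht => Real.rpow_nonneg ht.1.le _)),
    ← intervalIntegral.integral_of_le hT, integral_rpow (Or.inl hp),
    Real.zero_rpow (by linarith), sub_zero]

theorem lintegral_Ioi_rpow {p T : ℝ} (hp : p < -1) (hT : 0 < T) :
    ∫⁻ t in Ioi T, ENNReal.ofReal (t ^ p) = ENNReal.ofReal (-T ^ (p + 1) / (p + 1)) := by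
  rw [← ofReal_integral_eq_lintegral_ofReal (integrableOn_Ioi_rpow_of_lt hp hT)
      ((ae_restrict_iff' measurableSet_Ioi).mpr
        (.of_forall fun t ht => Real.rpow_nonneg (hT.trans ht).le _)),
    integral_Ioi_rpow_of_lt hp hT]

theorem lintegral_Ioi_min_le (f g : ℝ → ℝ) {S T : ℝ} (hST : S ≤ T) :
    ∫⁻ t in Ioi S, ENNReal.ofReal (min (f t) (g t)) ≤
      (∫⁻ t in Ioc S T, ENNReal.ofReal (f t)) + ∫⁻ t in Ioi T, ENNReal.ofReal (g t) := by
  rw [← Ioc_union_Ioi_eq_Ioi hST]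
  refine (lintegral_union_le _ _ _).trans (add_le_add ?_ ?_) <;>
    exact lintegral_mono fun t => ENNReal.ofReal_le_ofReal (by simp)

theorem lintegral_Ioi_zero_min_rpow_le {b p q : ℝ} (hb : 0 ≤ b) (hp : -1 < p) (hq : q < -1)
    {T : ℝ} (hT : 0 < T) :
    ∫⁻ t in Ioi 0, ENNReal.ofReal (min (b * t ^ p) (t ^ q)) ≤
      ENNReal.ofReal (b * (T ^ (p + 1) / (p + 1)) + -T ^ (q + 1) / (q + 1)) := by
  refine (lintegral_Ioi_min_le _ _ hT.le).trans_eq ?_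
  simp_rw [ENNReal.ofReal_mul hb]
  rw [lintegral_const_mul' _ _ ENNReal.ofReal_ne_top, lintegral_Ioc_zero_rpow hp hT.le,
    lintegral_Ioi_rpow hq hT, ← ENNReal.ofReal_mul hb, ← ENNReal.ofReal_add]
  · exact mul_nonneg hb (div_nonneg (by positivity) (by linarith))
  · exact div_nonneg_of_nonpos (neg_nonpos.2 (by positivity)) (by linarith)

theorem one_sub_exp_neg_mul_le_min {x y : ℝ} (hy : 0 ≤ y) :
    (1 - Real.exp (-x)) * y ≤ min (x * y) y := by
  refine le_min (mul_le_mul_of_nonneg_right ?_ hy) (mul_le_of_le_one_left hy ?_)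
  · linarith [Real.add_one_le_exp (-x)]
  · linarith [Real.exp_nonneg (-x)]

theorem one_sub_exp_neg_mul_rpow_mul_rpow_le {t : ℝ} (ht : 0 < t) (b α β : ℝ) :
    (1 - Real.exp (-(b * t ^ α))) * t ^ β ≤ min (b * t ^ (α + β)) (t ^ β) := by
  rw [Real.rpow_add ht, ← mul_assoc]
  exact one_sub_exp_neg_mul_le_min (Real.rpow_nonneg ht.le _)

theorem stmt4_general (α ε a : ℝ) (hε : ε ∈ Set.Ioo (0:ℝ) α)
    (ha : 0 < a) :
    ∃ c > 0, ∀ r ∈ Set.Ioc (0:ℝ) 1,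
      ∫⁻ t in Set.Ici (1:ℝ),
          ENNReal.ofReal ((1 - Real.exp (-(a * r * t ^ α))) * t ^ (-ε - 1)) ≤
        ENNReal.ofReal (c * r ^ (ε / α)) := by
  obtain ⟨hε0, hεα⟩ := hε
  have hα0 : 0 < α := hε0.trans hεα
  refine ⟨a / (α - ε) + 1 / ε, by have := sub_pos.2 hεα; positivity, ?_⟩
  rintro r ⟨hr0, -⟩
  -- the scale at which `a r t^α` becomes of order one
  set T : ℝ := r ^ (-(1 / α))
  have hT0 : 0 < T := Real.rpow_pos_of_pos hr0 _
  have hT_pow (β : ℝ) : T ^ β = r ^ (-β / α) := by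
    rw [← Real.rpow_mul hr0.le]; ring_nf
  have hr_mul : r * r ^ (-(α - ε) / α) = r ^ (ε / α) := by
    rw [show ε / α = 1 + -(α - ε) / α by field_simp; ring, Real.rpow_add hr0, Real.rpow_one]
  calc ∫⁻ t in Ici 1, ENNReal.ofReal ((1 - Real.exp (-(a * r * t ^ α))) * t ^ (-ε - 1))
      ≤ ∫⁻ t in Ioi 0, ENNReal.ofReal (min (a * r * t ^ (α + (-ε - 1))) (t ^ (-ε - 1))) :=
        (setLIntegral_mono' measurableSet_Ici fun t (ht : 1 ≤ t) => ENNReal.ofReal_le_ofReal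
          (one_sub_exp_neg_mul_rpow_mul_rpow_le (one_pos.trans_le ht) _ _ _)).trans
          (lintegral_mono_set (Ici_subset_Ioi.2 one_pos))
    _ ≤ _ := lintegral_Ioi_zero_min_rpow_le (by positivity) (by linarith) (by linarith) hT0
    _ = ENNReal.ofReal ((a / (α - ε) + 1 / ε) * r ^ (ε / α)) := by
        rw [show α + (-ε - 1) + 1 = α - ε by ring, show -ε - 1 + 1 = -ε by ring, hT_pow, hT_pow,
          neg_neg, ← hr_mul]
        congr 1
        ring

theorem stmt4 (α ε a : ℝ) (hα : α ∈ Set.Ioc (0:ℝ) 1) (hε : ε ∈ Set.Ioo (0:ℝ) α)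
    (ha : 0 < a) :
    ∃ c > 0, ∀ r ∈ Set.Ioc (0:ℝ) 1,
      ∫⁻ t in Set.Ici (1:ℝ),
          ENNReal.ofReal ((1 - Real.exp (-(a * r * t ^ α))) * t ^ (-ε - 1)) ≤
        ENNReal.ofReal (c * r ^ (ε / α)) :=
  stmt4_general α ε a hε ha
end

section
/- Let α ∈ (0,1], β > 0 and k₀ > 0. Then there exists a constant c > 0 such that for every r > 0, ∫_0^∞ t^{β−1} e^{−r k₀ · min(t, t^{α})} dt ≤ c (1 + r^{−β/α}). -/
open MeasureTheory Set

/-!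
Since `min t tᵅ` is one of `t`, `tᵅ`, the integrand is dominated by the sum of
`t^(β-1) e^{-r k₀ t}` and `t^(β-1) e^{-r k₀ tᵅ}`, two Gamma-type integrals equal to
`Γ(β) (r k₀)^{-β}` and `Γ(β/α) (r k₀)^{-β/α} / α`. Finally `r^{-β} ≤ 1 + r^{-β/α}`,
because `r^{-β} ≤ 1` for `r ≥ 1` and `r^{-β} ≤ r^{-β/α}` for `r ≤ 1`, as `β ≤ β/α`.
-/

lemma ENNReal.ofReal_comp_min_le (f : ℝ → ℝ) (x y : ℝ) :
    ENNReal.ofReal (f (min x y)) ≤ ENNReal.ofReal (f x) + ENNReal.ofReal (f y) := by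
  rcases min_cases x y with ⟨h, _⟩ | ⟨h, _⟩ <;> rw [h]
  · exact le_self_add
  · exact le_add_self

lemma lintegral_rpow_sub_one_mul_exp_neg_mul_rpow {p s b : ℝ} (hp : 0 < p) (hs : 0 < s)
    (hb : 0 < b) :
    ∫⁻ x in Ioi (0 : ℝ), ENNReal.ofReal (x ^ (s - 1) * Real.exp (-(b * x ^ p))) =
      ENNReal.ofReal (b ^ (-s / p) * (Real.Gamma (s / p) / p)) := by
  have hq : -1 < s - 1 := by linarith
  simp_rw [← neg_mul]
  rw [← ofReal_integral_eq_lintegral_ofReal (integrableOn_rpow_mul_exp_neg_mul_rpow hq hp hb),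
    integral_rpow_mul_exp_neg_mul_rpow hp hq hb, sub_add_cancel, neg_div]
  · congr 1; ring
  · filter_upwards [ae_restrict_mem measurableSet_Ioi] with x (hx : 0 < x)
    positivity

lemma Real.rpow_le_one_add_rpow {r a b : ℝ} (hr : 0 < r) (ha : a ≤ 0) (hba : b ≤ a) :
    r ^ a ≤ 1 + r ^ b := by
  rcases le_total 1 r with h1 | h1
  · linarith [Real.rpow_le_one_of_one_le_of_nonpos h1 ha, Real.rpow_nonneg hr.le b]
  · linarith [Real.rpow_le_rpow_of_exponent_ge hr h1 hba]

theorem stmt5 (α β k₀ : ℝ) (hα : α ∈ Set.Ioc (0:ℝ) 1) (hβ : 0 < β) (hk₀ : 0 < k₀) :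
    ∃ c > 0, ∀ r : ℝ, 0 < r →
      ∫⁻ t in Set.Ioi (0:ℝ),
          ENNReal.ofReal (t ^ (β - 1) * Real.exp (-(r * k₀ * min t (t ^ α)))) ≤
        ENNReal.ofReal (c * (1 + r ^ (-β / α))) := by
  obtain ⟨hα0, hα1⟩ := hα
  set C₁ := k₀ ^ (-β) * Real.Gamma β
  set C₂ := k₀ ^ (-β / α) * (Real.Gamma (β / α) / α)
  have hC₁ : 0 < C₁ := by positivity
  have hC₂ : 0 < C₂ := by have := div_pos hβ hα0; positivity
  refine ⟨C₁ + C₂, by positivity, fun r hr => ?_⟩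
  have hrk := mul_pos hr hk₀
  have hr_pow : r ^ (-β) ≤ 1 + r ^ (-β / α) :=
    Real.rpow_le_one_add_rpow hr (by linarith) (by
      rw [neg_div, neg_le_neg_iff, le_div_iff₀ hα0]; nlinarith)
  have h₁ := lintegral_rpow_sub_one_mul_exp_neg_mul_rpow one_pos hβ hrk
  have h₂ := lintegral_rpow_sub_one_mul_exp_neg_mul_rpow hα0 hβ hrk
  simp only [Real.rpow_one, div_one] at h₁
  rw [Real.mul_rpow hr.le hk₀.le, mul_assoc] at h₁ h₂
  calc _ ≤ ∫⁻ t in Ioi (0 : ℝ), (ENNReal.ofReal (t ^ (β - 1) * Real.exp (-(r * k₀ * t))) +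
          ENNReal.ofReal (t ^ (β - 1) * Real.exp (-(r * k₀ * t ^ α)))) :=
        lintegral_mono fun t =>
          ENNReal.ofReal_comp_min_le (fun m => t ^ (β - 1) * Real.exp (-(r * k₀ * m))) _ _
    _ = ENNReal.ofReal (r ^ (-β) * C₁ + r ^ (-β / α) * C₂) := by
        rw [lintegral_add_left (by fun_prop), h₁, h₂,
          ← ENNReal.ofReal_add (by positivity) (by positivity)]
    _ ≤ ENNReal.ofReal ((C₁ + C₂) * (1 + r ^ (-β / α))) := by
        gcongr
        nlinarith [Real.rpow_nonneg hr.le (-β / α)]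
end

section
/- There exists a constant c > 0 such that for every s ∈ (0,1], ∑_{m ∈ ℤ³, m ≠ 0} e^{−|m|² s} / |m|² ≤ c s^{−1/2}. -/
/-!
Writing `n = |m|²`, the weight `e^{-ns}/n` is bounded by the Riemann sum `s ∑_{j ≥ 1} e^{-njs}` of
`∫_s^∞ e^{-nt} dt`. Exchanging the sums leaves `s ∑_{j ≥ 1} Θ(js)`, where
`Θ(u) = ∑_{m ≠ 0} e^{-|m|² u} = (1 + 2T(u))³ - 1` and `T(u) = ∑_{k ≥ 1} e^{-k² u}`.
The integral test against the Gaussian gives `T(u) ≤ u^{-1/2}`, and `k² u ≥ u/2 + k² u/2` gives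
`T(u) ≤ e^{-u/2} T(u/2) ≤ 3 u^{-3/2}`; together `Θ(u) ≤ 50 u^{-3/2}`, so the whole sum is at most
`50 ζ(3/2) s^{-1/2}`.
-/

open Set

/-- Euclidean norm of a point of `ℤ³`. -/
noncomputable def znorm (m : ℤ × ℤ × ℤ) : ℝ :=
  Real.sqrt ((m.1 : ℝ) ^ 2 + (m.2.1 : ℝ) ^ 2 + (m.2.2 : ℝ) ^ 2)

open Real MeasureTheory
open scoped ENNReal

noncomputable def thetaTail (u : ℝ) : ℝ := ∑' n : ℕ, rexp (-u * ((n : ℝ) + 1) ^ 2)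

section thetaTail

variable {u : ℝ}

lemma antitoneOn_exp_neg_mul_sq (hu : 0 ≤ u) :
    AntitoneOn (fun x : ℝ ↦ rexp (-u * x ^ 2)) (Ici 0) := by
  intro x hx y _ hxy
  simp only [exp_le_exp, neg_mul, neg_le_neg_iff]
  exact mul_le_mul_of_nonneg_left (pow_le_pow_left₀ hx hxy 2) hu

lemma summable_exp_neg_mul_add_one_sq (hu : 0 < u) :
    Summable fun n : ℕ ↦ rexp (-u * ((n : ℝ) + 1) ^ 2) := by
  have := (antitoneOn_exp_neg_mul_sq hu.le).summable_of_integrableOn_Ioi_zero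
    (integrable_exp_neg_mul_sq hu).integrableOn fun _ _ ↦ (exp_pos _).le
  exact_mod_cast (summable_nat_add_iff 1).mpr this

lemma thetaTail_nonneg (u : ℝ) : 0 ≤ thetaTail u :=
  tsum_nonneg fun _ ↦ (exp_pos _).le

lemma thetaTail_le_sqrt_pi_div (hu : 0 < u) : thetaTail u ≤ √(π / u) / 2 := by
  have h := (antitoneOn_exp_neg_mul_sq hu.le).tsum_add_one_le_integral
    (integrable_exp_neg_mul_sq hu).integrableOn fun _ _ ↦ (exp_pos _).le
  push_cast at h
  rwa [thetaTail, ← integral_gaussian_Ioi]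

lemma thetaTail_le_exp_mul (hu : 0 < u) :
    thetaTail u ≤ rexp (-(u / 2)) * thetaTail (u / 2) := by
  rw [thetaTail, thetaTail, ← tsum_mul_left]
  refine (summable_exp_neg_mul_add_one_sq hu).tsum_le_tsum (fun n ↦ ?_)
    ((summable_exp_neg_mul_add_one_sq (half_pos hu)).mul_left _)
  rw [← exp_add, exp_le_exp]
  have : (1 : ℝ) ≤ ((n : ℝ) + 1) ^ 2 := by nlinarith [(n.cast_nonneg : (0 : ℝ) ≤ n)]
  nlinarith

lemma thetaTail_mul_sqrt_le_one (hu : 0 < u) : thetaTail u * √u ≤ 1 := by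
  have hsqrt : √(π / u) * √u = √π := by
    rw [← sqrt_mul (div_nonneg pi_pos.le hu.le), div_mul_cancel₀ _ hu.ne']
  have hpi : √π ≤ 2 := by
    rw [sqrt_le_left zero_le_two]
    linarith [pi_lt_four]
  nlinarith [thetaTail_le_sqrt_pi_div hu, sqrt_nonneg u]

lemma thetaTail_mul_sqrt_pow_three_le_three (hu : 0 < u) : thetaTail u * √u ^ 3 ≤ 3 := by
  have hdecay := thetaTail_le_exp_mul hu
  have hhalf := thetaTail_mul_sqrt_le_one (half_pos hu)
  have hsqrt : √u ≤ 3 / 2 * √(u / 2) := by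
    have hsqrt2 : √2 ≤ 3 / 2 := by
      rw [sqrt_le_left (by norm_num)]
      norm_num
    calc √u = √2 * √(u / 2) := by rw [← sqrt_mul zero_le_two]; ring_nf
      _ ≤ 3 / 2 * √(u / 2) := by gcongr
  have hexp : rexp (-(u / 2)) * u ≤ 2 := by
    have := add_one_le_exp (u / 2)
    rw [exp_neg, inv_mul_le_iff₀ (exp_pos _)]
    linarith
  calc thetaTail u * √u ^ 3 = thetaTail u * √u * u := by
        rw [pow_succ, sq_sqrt hu.le]
        ring
    _ ≤ rexp (-(u / 2)) * thetaTail (u / 2) * (3 / 2 * √(u / 2)) * u := by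
        gcongr
        exact mul_nonneg (exp_pos _).le (thetaTail_nonneg _)
    _ = rexp (-(u / 2)) * u * (3 / 2 * (thetaTail (u / 2) * √(u / 2))) := by ring
    _ ≤ 2 * (3 / 2 * 1) := by
        gcongr
        exact mul_nonneg (by norm_num) (mul_nonneg (thetaTail_nonneg _) (sqrt_nonneg _))
    _ = 3 := by norm_num

lemma tsum_int_ofReal_exp_neg_mul_sq (hu : 0 < u) :
    ∑' k : ℤ, ENNReal.ofReal (rexp (-u * (k : ℝ) ^ 2)) = ENNReal.ofReal (1 + 2 * thetaTail u) := by
  have htail : ∑' n : ℕ, ENNReal.ofReal (rexp (-u * ((n : ℝ) + 1) ^ 2)) =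
      ENNReal.ofReal (thetaTail u) :=
    (ENNReal.ofReal_tsum_of_nonneg (fun _ ↦ (exp_pos _).le)
      (summable_exp_neg_mul_add_one_sq hu)).symm
  rw [tsum_of_nat_of_neg_add_one ENNReal.summable ENNReal.summable,
    tsum_eq_zero_add' ENNReal.summable]
  push_cast
  simp only [neg_sq, htail, zero_pow two_ne_zero, mul_zero, exp_zero]
  rw [ENNReal.ofReal_add zero_le_one (by linarith [thetaTail_nonneg u]), two_mul,
    ENNReal.ofReal_add (thetaTail_nonneg u) (thetaTail_nonneg u), add_assoc]

end thetaTail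

lemma ENNReal.tsum_triple_mul_eq_pow_three {α : Type*} (f : α → ℝ≥0∞) :
    ∑' m : α × α × α, f m.1 * f m.2.1 * f m.2.2 = (∑' a, f a) ^ 3 := by
  simp only [ENNReal.tsum_prod', mul_assoc, ENNReal.tsum_mul_left, ENNReal.tsum_mul_right,
    pow_three]

lemma ENNReal.add_tsum_subtype_ne {α : Type*} (f : α → ℝ≥0∞) (a : α) :
    f a + ∑' x : {x // x ≠ a}, f x = ∑' x, f x := by
  rw [ENNReal.tsum_eq_add_tsum_ite a, ← tsum_subtype_eq_of_support_subset (s := {x | x ≠ a})]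
  · exact congrArg _ (tsum_congr fun x ↦ (if_neg x.2).symm)
  · exact fun x hx hxa ↦ hx (if_pos hxa)

lemma znorm_sq (m : ℤ × ℤ × ℤ) :
    znorm m ^ 2 = (m.1 : ℝ) ^ 2 + (m.2.1 : ℝ) ^ 2 + (m.2.2 : ℝ) ^ 2 :=
  sq_sqrt (by positivity)

lemma znorm_sq_pos {m : ℤ × ℤ × ℤ} (hm : m ≠ 0) : 0 < znorm m ^ 2 := by
  obtain ⟨a, b, c⟩ := m
  rw [znorm_sq]
  simp only [ne_eq, Prod.mk_eq_zero, not_and_or] at hm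
  rcases hm with h | h | h <;> positivity

lemma ofReal_exp_neg_znorm_sq_mul (u : ℝ) (m : ℤ × ℤ × ℤ) :
    ENNReal.ofReal (rexp (-(znorm m ^ 2 * u))) =
      ENNReal.ofReal (rexp (-u * (m.1 : ℝ) ^ 2)) * ENNReal.ofReal (rexp (-u * (m.2.1 : ℝ) ^ 2)) *
        ENNReal.ofReal (rexp (-u * (m.2.2 : ℝ) ^ 2)) := by
  rw [← ENNReal.ofReal_mul (by positivity), ← ENNReal.ofReal_mul (by positivity), ← exp_add,
    ← exp_add, znorm_sq]
  ring_nf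

lemma tsum_ofReal_exp_neg_znorm_sq_mul {u : ℝ} (hu : 0 < u) :
    ∑' m : {m : ℤ × ℤ × ℤ // m ≠ 0}, ENNReal.ofReal (rexp (-(znorm m ^ 2 * u))) =
      ENNReal.ofReal ((1 + 2 * thetaTail u) ^ 3 - 1) := by
  set g : ℤ → ℝ≥0∞ := fun k ↦ ENNReal.ofReal (rexp (-u * (k : ℝ) ^ 2))
  have h := ENNReal.add_tsum_subtype_ne (fun m : ℤ × ℤ × ℤ ↦ g m.1 * g m.2.1 * g m.2.2) 0
  have hone : 1 ≤ (1 + 2 * thetaTail u) ^ 3 := one_le_pow₀ (by linarith [thetaTail_nonneg u])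
  rw [ENNReal.tsum_triple_mul_eq_pow_three, tsum_int_ofReal_exp_neg_mul_sq hu,
    ← ENNReal.ofReal_pow (by linarith [thetaTail_nonneg u]),
    ← add_sub_cancel (1 : ℝ) ((1 + 2 * thetaTail u) ^ 3),
    ENNReal.ofReal_add zero_le_one (by linarith)] at h
  simp only [ofReal_exp_neg_znorm_sq_mul u]
  simpa [g] using h

lemma tsum_ofReal_exp_neg_znorm_sq_mul_le {u : ℝ} (hu : 0 < u) :
    ∑' m : {m : ℤ × ℤ × ℤ // m ≠ 0}, ENNReal.ofReal (rexp (-(znorm m ^ 2 * u))) ≤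
      ENNReal.ofReal (50 * u ^ (-(3 / 2 : ℝ))) := by
  rw [tsum_ofReal_exp_neg_znorm_sq_mul hu]
  refine ENNReal.ofReal_le_ofReal ?_
  have hrpow : u ^ (-(3 / 2 : ℝ)) = (√u ^ 3)⁻¹ := by
    rw [rpow_neg hu.le, sqrt_eq_rpow, ← rpow_natCast, ← rpow_mul hu.le]
    norm_num
  have hr : 0 < √u := sqrt_pos.mpr hu
  have ht := thetaTail_nonneg u
  have hcube : (thetaTail u * √u) ^ 3 ≤ 1 :=
    pow_le_one₀ (mul_nonneg ht hr.le) (thetaTail_mul_sqrt_le_one hu)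
  rw [hrpow, ← div_eq_mul_inv, le_div_iff₀ (by positivity)]
  -- `2 t² ≤ t + t³` reduces the cubic to the two bounds on `t = thetaTail u`
  nlinarith [thetaTail_mul_sqrt_pow_three_le_three hu,
    mul_nonneg (mul_nonneg ht (sq_nonneg (1 - thetaTail u))) (pow_nonneg hr.le 3)]

lemma ofReal_exp_neg_mul_div_le_tsum {n s : ℝ} (hn : 0 < n) (hs : 0 < s) :
    ENNReal.ofReal (rexp (-(n * s)) / n) ≤
      ∑' j : ℕ, ENNReal.ofReal (s * rexp (-(n * ((j + 1) * s)))) := by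
  set r := rexp (-(n * s))
  have hr : r < 1 := exp_lt_one_iff.mpr (by linarith [mul_pos hn hs])
  have hterm (j : ℕ) : s * rexp (-(n * ((j + 1) * s))) = s * r * r ^ j := by
    rw [← exp_nat_mul, mul_assoc, ← exp_add]
    ring_nf
  have hsum : HasSum (fun j : ℕ ↦ s * rexp (-(n * ((j + 1) * s)))) (s * r * (1 - r)⁻¹) := by
    simpa only [hterm] using (hasSum_geometric_of_lt_one (exp_pos _).le hr).mul_left (s * r)
  rw [← ENNReal.ofReal_tsum_of_nonneg (fun _ ↦ by positivity) hsum.summable, hsum.tsum_eq]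
  refine ENNReal.ofReal_le_ofReal ?_
  have hlin : 1 - r ≤ n * s := by linarith [add_one_le_exp (-(n * s))]
  have h1r : 0 < 1 - r := sub_pos.mpr hr
  rw [div_le_iff₀ hn]
  calc r = r * ((1 - r) / (1 - r)) := by rw [div_self h1r.ne', mul_one]
    _ ≤ r * (n * s / (1 - r)) := by gcongr
    _ = s * r * (1 - r)⁻¹ * n := by ring

lemma summable_nat_add_one_rpow {p : ℝ} (hp : p < -1) :
    Summable fun j : ℕ ↦ ((j : ℝ) + 1) ^ p := by
  have := (summable_nat_add_iff 1).mpr (Real.summable_nat_rpow.mpr hp)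
  exact_mod_cast this

theorem stmt10 :
    ∃ c > 0, ∀ s ∈ Set.Ioc (0:ℝ) 1,
      (∑' m : {m : ℤ × ℤ × ℤ // m ≠ 0},
          ENNReal.ofReal (Real.exp (-(znorm m ^ 2 * s)) / znorm m ^ 2)) ≤
        ENNReal.ofReal (c * s ^ (-(1/2 : ℝ))) := by
  have hζ := summable_nat_add_one_rpow (p := -(3 / 2)) (by norm_num)
  refine ⟨50 * ∑' j : ℕ, ((j : ℝ) + 1) ^ (-(3 / 2 : ℝ)),
    mul_pos (by norm_num) (hζ.tsum_pos (fun _ ↦ by positivity) 0 (by positivity)), ?_⟩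
  rintro s ⟨hs, -⟩
  calc _ ≤ ∑' m : {m : ℤ × ℤ × ℤ // m ≠ 0}, ∑' j : ℕ,
          ENNReal.ofReal (s * rexp (-(znorm m ^ 2 * ((j + 1) * s)))) :=
        ENNReal.tsum_le_tsum fun m ↦ ofReal_exp_neg_mul_div_le_tsum (znorm_sq_pos m.2) hs
    _ = ∑' j : ℕ, ENNReal.ofReal s * ∑' m : {m : ℤ × ℤ × ℤ // m ≠ 0},
          ENNReal.ofReal (rexp (-(znorm m ^ 2 * ((j + 1) * s)))) := by
        rw [ENNReal.tsum_comm]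
        simp_rw [ENNReal.ofReal_mul hs.le, ENNReal.tsum_mul_left]
    _ ≤ ∑' j : ℕ, ENNReal.ofReal s * ENNReal.ofReal (50 * ((j + 1) * s) ^ (-(3 / 2 : ℝ))) := by
        gcongr with j
        exact tsum_ofReal_exp_neg_znorm_sq_mul_le (by positivity)
    _ = ∑' j : ℕ, ENNReal.ofReal (50 * s ^ (-(1 / 2 : ℝ)) * ((j : ℝ) + 1) ^ (-(3 / 2 : ℝ))) := by
        congr 1 with j
        rw [← ENNReal.ofReal_mul hs.le, mul_rpow (by positivity) hs.le,
          show (-(1 / 2 : ℝ)) = 1 + -(3 / 2) by norm_num, rpow_add hs, rpow_one]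
        ring_nf
    _ = _ := by
        rw [← ENNReal.ofReal_tsum_of_nonneg (fun _ ↦ by positivity) (hζ.mul_left _), tsum_mul_left]
        ring_nf
end

section
/- There exists a constant c > 0 such that for every s ∈ (0,1], ∑_{m ∈ ℤ³, m ≠ 0} e^{−|m|² s} / |m|³ ≤ c (1 + log(1/s)). -/
open Set

/-!
Since `max |mⁱ| ≤ |m|`, every term with `max |mⁱ| = k` is at most `e^{-k²s}/k³`, and there are
at most `(2k+1)³ - (2k-1)³ ≤ 26 k²` such lattice points, so the sum is at most
`26 ∑_{k ≥ 1} e^{-k²s}/k`. Splitting this one-dimensional sum at `N = ⌈1/s⌉`, the head is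
bounded by the harmonic number `H_N ≤ 1 + log N`, and in the tail `e^{-k²s} ≤ 1/(k²s) ≤ 1/k`
gives terms `≤ 1/k²`, summing to at most `2/(N+1) ≤ 1`.
-/

open Finset Real

lemma znorm_nonneg (m : ℤ × ℤ × ℤ) : 0 ≤ znorm m := sqrt_nonneg _

def supNorm (m : ℤ × ℤ × ℤ) : ℕ := max m.1.natAbs (max m.2.1.natAbs m.2.2.natAbs)

lemma supNorm_le_znorm (m : ℤ × ℤ × ℤ) : (supNorm m : ℝ) ≤ znorm m := by
  obtain ⟨a, b, c⟩ := m
  simp only [supNorm, znorm, Nat.cast_max, Nat.cast_natAbs, Int.cast_abs]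
  refine max_le ?_ (max_le ?_ ?_) <;> refine le_sqrt_of_sq_le ?_ <;>
    simp only [sq_abs] <;> nlinarith [sq_nonneg (a : ℝ), sq_nonneg (b : ℝ), sq_nonneg (c : ℝ)]

lemma one_le_supNorm {m : ℤ × ℤ × ℤ} (hm : m ≠ 0) : 1 ≤ supNorm m := by
  obtain ⟨a, b, c⟩ := m
  simp only [ne_eq, Prod.mk_eq_zero] at hm
  simp only [supNorm]
  omega

lemma mem_box_iff_supNorm_eq {m : ℤ × ℤ × ℤ} {n : ℕ} : m ∈ box n ↔ supNorm m = n := by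
  cases n with
  | zero => simp [supNorm, Prod.ext_iff]
  | succ n =>
    simp only [box_succ_eq_sdiff, Finset.mem_sdiff, Finset.mem_Icc, Prod.le_def, Prod.fst_neg,
      Prod.snd_neg, Prod.fst_natCast, Prod.snd_natCast, supNorm]
    push_cast
    omega

lemma card_box_le {n : ℕ} (hn : n ≠ 0) : #(box n : Finset (ℤ × ℤ × ℤ)) ≤ 26 * n ^ 2 := by
  obtain ⟨n, rfl⟩ := Nat.exists_eq_succ_of_ne_zero hn
  rw [Prod.card_box_succ]
  simp only [card_Icc_prod, Prod.fst_natCast, Prod.snd_natCast, Prod.fst_neg, Prod.snd_neg,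
    Int.card_Icc, sub_neg_eq_add, Nat.succ_eq_add_one]
  norm_cast
  rw [tsub_le_iff_right]
  ring_nf
  omega

lemma sum_comp_supNorm_le {T : Finset (ℤ × ℤ × ℤ)} (hT : ∀ m ∈ T, m ≠ 0) {φ : ℕ → ℝ}
    (hφ : ∀ k, 0 ≤ φ k) :
    ∑ m ∈ T, φ (supNorm m) ≤ ∑ k ∈ Icc 1 (T.sup supNorm), 26 * k ^ 2 * φ k := by
  rw [← sum_fiberwise_of_maps_to fun m hm ↦ mem_Icc.2 ⟨one_le_supNorm (hT m hm), le_sup hm⟩]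
  refine sum_le_sum fun k hk ↦ ?_
  calc ∑ m ∈ T with supNorm m = k, φ (supNorm m)
      = ∑ m ∈ T with supNorm m = k, φ k := sum_congr rfl fun m hm ↦ by rw [(mem_filter.1 hm).2]
    _ ≤ ∑ m ∈ box k, φ k := sum_le_sum_of_subset_of_nonneg
          (fun m hm ↦ mem_box_iff_supNorm_eq.2 (mem_filter.1 hm).2) fun _ _ _ ↦ hφ k
    _ = #(box k) * φ k := by rw [sum_const, nsmul_eq_mul]
    _ ≤ 26 * k ^ 2 * φ k := by
          gcongr
          · exact hφ k
          · exact_mod_cast card_box_le (by have := (mem_Icc.1 hk).1; omega)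

lemma exp_neg_le_inv {x : ℝ} (hx : 0 < x) : exp (-x) ≤ x⁻¹ := by
  rw [exp_neg]
  exact inv_anti₀ hx (by linarith [add_one_le_exp x])

lemma exp_neg_sq_mul_div_le_inv_sq {s : ℝ} {k : ℕ} (hk : 1 ≤ k * s) :
    exp (-(k ^ 2 * s)) / k ≤ ((k : ℝ) ^ 2)⁻¹ := by
  have hk0 : (0 : ℝ) < k := Nat.cast_pos.2 (Nat.pos_of_ne_zero (by rintro rfl; norm_num at hk))
  have hs : 0 < s := pos_of_mul_pos_right (by linarith) hk0.le
  rw [div_le_iff₀ hk0]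
  calc exp (-(k ^ 2 * s)) ≤ (k ^ 2 * s)⁻¹ := exp_neg_le_inv (by positivity)
    _ ≤ ((k : ℝ) ^ 2)⁻¹ * k := by
        rw [mul_inv]
        gcongr
        rwa [inv_le_iff_one_le_mul₀ hs]

lemma sum_exp_neg_sq_mul_div_le {s : ℝ} (hs0 : 0 < s) (hs1 : s ≤ 1) (K : ℕ) :
    ∑ k ∈ Icc 1 K, exp (-(k ^ 2 * s)) / k ≤ 3 + log (1 / s) := by
  set N := ⌈s⁻¹⌉₊
  have hN : 1 ≤ N * s := (inv_le_iff_one_le_mul₀ hs0).1 (Nat.le_ceil _)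
  have hN1 : 1 ≤ N := Nat.one_le_ceil_iff.2 (inv_pos.2 hs0)
  have hlogN : log N ≤ 1 + log (1 / s) := by
    have hN2 : (N : ℝ) ≤ 2 * s⁻¹ := by
      linarith [Nat.ceil_lt_add_one (inv_pos.2 hs0).le, one_le_inv_iff₀.2 ⟨hs0, hs1⟩]
    calc log N ≤ log (2 * s⁻¹) := log_le_log (by positivity) hN2
      _ = log 2 + log (1 / s) := by rw [log_mul two_ne_zero (inv_ne_zero hs0.ne'), one_div]
      _ ≤ 1 + log (1 / s) := by linarith [log_two_lt_d9]
  have head : ∑ k ∈ Icc 1 K with k ≤ N, exp (-(k ^ 2 * s)) / k ≤ 1 + log N :=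
    calc ∑ k ∈ Icc 1 K with k ≤ N, exp (-(k ^ 2 * s)) / k
        ≤ ∑ k ∈ Icc 1 N, exp (-(k ^ 2 * s)) / k :=
          sum_le_sum_of_subset_of_nonneg
            (fun k hk ↦ by simp only [Finset.mem_filter, Finset.mem_Icc] at hk ⊢; omega)
            fun k _ _ ↦ by positivity
      _ ≤ ∑ k ∈ Icc 1 N, (k : ℝ)⁻¹ := sum_le_sum fun k _ ↦ by
          rw [div_eq_mul_inv]
          exact mul_le_of_le_one_left (by positivity)
            (exp_le_one_iff.2 (neg_nonpos.2 (by positivity)))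
      _ = harmonic N := by rw [harmonic_eq_sum_Icc]; push_cast; rfl
      _ ≤ 1 + log N := harmonic_le_one_add_log N
  have tail : ∑ k ∈ Icc 1 K with ¬k ≤ N, exp (-(k ^ 2 * s)) / k ≤ 1 :=
    calc ∑ k ∈ Icc 1 K with ¬k ≤ N, exp (-(k ^ 2 * s)) / k
        ≤ ∑ k ∈ Ioo N (K + 1), exp (-(k ^ 2 * s)) / k :=
          sum_le_sum_of_subset_of_nonneg (fun k hk ↦ by
            simp only [Finset.mem_filter, Finset.mem_Icc, Finset.mem_Ioo] at hk ⊢; omega)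
            fun k _ _ ↦ by positivity
      _ ≤ ∑ k ∈ Ioo N (K + 1), ((k : ℝ) ^ 2)⁻¹ := sum_le_sum fun k hk ↦
          exp_neg_sq_mul_div_le_inv_sq (hN.trans (by gcongr; exact (mem_Ioo.1 hk).1.le))
      _ ≤ 2 / (N + 1) := sum_Ioo_inv_sq_le N (K + 1)
      _ ≤ 1 := by rw [div_le_one (by positivity)]; exact_mod_cast Nat.succ_le_succ hN1
  rw [← sum_filter_add_sum_filter_not _ (· ≤ N)]
  linarith

lemma exp_neg_sq_mul_div_pow_three_le {s a b : ℝ} (hs : 0 ≤ s) (ha : 0 < a) (hab : a ≤ b) :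
    exp (-(b ^ 2 * s)) / b ^ 3 ≤ exp (-(a ^ 2 * s)) / a ^ 3 :=
  div_le_div₀ (exp_pos _).le
    (exp_le_exp.2 (neg_le_neg (mul_le_mul_of_nonneg_right (pow_le_pow_left₀ ha.le hab 2) hs)))
    (by positivity)
    (pow_le_pow_left₀ ha.le hab 3)

lemma sum_exp_neg_znorm_sq_div_le {s : ℝ} (hs0 : 0 < s) (hs1 : s ≤ 1) {T : Finset (ℤ × ℤ × ℤ)}
    (hT : ∀ m ∈ T, m ≠ 0) :
    ∑ m ∈ T, exp (-(znorm m ^ 2 * s)) / znorm m ^ 3 ≤ 78 * (1 + log (1 / s)) := by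
  have hlog : 0 ≤ log (1 / s) := log_nonneg (one_le_one_div hs0 hs1)
  calc ∑ m ∈ T, exp (-(znorm m ^ 2 * s)) / znorm m ^ 3
      ≤ ∑ m ∈ T, exp (-((supNorm m : ℝ) ^ 2 * s)) / (supNorm m : ℝ) ^ 3 :=
        sum_le_sum fun m hm ↦ exp_neg_sq_mul_div_pow_three_le hs0.le
          (Nat.cast_pos.2 (one_le_supNorm (hT m hm))) (supNorm_le_znorm m)
    _ ≤ ∑ k ∈ Icc 1 (T.sup supNorm), 26 * k ^ 2 * (exp (-((k : ℝ) ^ 2 * s)) / (k : ℝ) ^ 3) :=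
        sum_comp_supNorm_le (φ := fun k : ℕ ↦ exp (-((k : ℝ) ^ 2 * s)) / (k : ℝ) ^ 3) hT
          fun k ↦ by positivity
    _ = 26 * ∑ k ∈ Icc 1 (T.sup supNorm), exp (-((k : ℝ) ^ 2 * s)) / k := by
        rw [mul_sum]
        refine sum_congr rfl fun k hk ↦ ?_
        have : (k : ℝ) ≠ 0 := Nat.cast_ne_zero.2 (Nat.one_le_iff_ne_zero.1 (mem_Icc.1 hk).1)
        field_simp
    _ ≤ 26 * (3 + log (1 / s)) := by gcongr; exact sum_exp_neg_sq_mul_div_le hs0 hs1 _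
    _ ≤ 78 * (1 + log (1 / s)) := by linarith

theorem stmt13 :
    ∃ c > 0, ∀ s ∈ Set.Ioc (0:ℝ) 1,
      (∑' m : {m : ℤ × ℤ × ℤ // m ≠ 0},
          ENNReal.ofReal (Real.exp (-(znorm m ^ 2 * s)) / znorm m ^ 3)) ≤
        ENNReal.ofReal (c * (1 + Real.log (1 / s))) := by
  refine ⟨78, by norm_num, fun s ⟨hs0, hs1⟩ ↦ tsum_le_of_sum_le' zero_le fun S ↦ ?_⟩
  rw [← ENNReal.ofReal_sum_of_nonneg fun m _ ↦
    div_nonneg (exp_pos _).le (pow_nonneg (znorm_nonneg _) 3)]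
  refine ENNReal.ofReal_le_ofReal ?_
  have := sum_exp_neg_znorm_sq_div_le hs0 hs1 (T := S.map (.subtype _)) fun m hm ↦ by
    obtain ⟨x, -, rfl⟩ := mem_map.1 hm
    exact x.2
  rwa [sum_map] at this
end
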